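/- arXiv:2203.12801 — 2 statements merged into one kernel-verified Lean document; each statement's English description precedes it below -/
import Mathlib

section
/- Let m, n be integers with 1 ≤ m < n/2 and q a prime power, with q → ∞, m constant, and n = o(q^m·(log q)^{−1}). Let X be the random subset of F_q^n in which each point is included independently with probability θ. Then the event that X is an m-blocking set (i.e., X intersects every m-flat of F_q^n) has threshold function n·q^{−m}·log q. -/
/-!
An `m`-flat is `v + span f` for some `(f, v) ∈ V^m × V`, so there are at most `q^(n(m+1))` of
them, and `X` misses a given one with probability `(1-θ)^(q^m)`. By the union bound, `X` fails to
be blocking with probability at most `q^(n(m+1)) (1-θ)^(q^m) ≤ exp((m+1) n log q - θ q^m)`, which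
is `o(1)` once `θ q^m ≫ n log q`.

Conversely, the `q^(n-m)` cosets of one `m`-dimensional subspace are disjoint `m`-flats, so `X`
meets all of them with probability
`(1 - (1-θ)^(q^m))^(q^(n-m)) ≤ exp(-q^(n-m) e^(-2θ q^m)) ≤ exp(2θ q^m - (n-m) log q)`.
This is `o(1)` when `θ q^m ≪ n log q`, since `n - m > n/2`; here `1 - θ ≥ e^(-2θ)` needs
`θ ≤ 1/2`, which `n = o(q^m / log q)` guarantees.
-/

open Filter Asymptotics

noncomputable def prRandomSubset {α : Type*} (U : Finset α) (θ : ℝ)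
    (E : Finset α → Prop) : ℝ :=
  ∑ A ∈ U.powerset,
    @ite ℝ (E A) (Classical.propDecidable _)
      (θ ^ A.card * (1 - θ) ^ (U.card - A.card)) 0

def IsFlat (K : Type*) {V : Type*} [Field K] [AddCommGroup V] [Module K V]
    (m : ℕ) (S : Set V) : Prop :=
  ∃ W : Submodule K V, Module.finrank K W = m ∧ ∃ v : V, S = (v + ·) '' (W : Set V)

theorem Real.exp_neg_two_mul_le_one_sub {θ : ℝ} (h0 : 0 ≤ θ) (h : θ ≤ 1 / 2) :
    exp (-(2 * θ)) ≤ 1 - θ := by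
  rw [exp_neg, inv_le_iff_one_le_mul₀' (exp_pos _)]
  nlinarith [add_one_le_exp (2 * θ)]

theorem Real.one_sub_one_sub_pow_pow_le_exp {θ : ℝ} (h0 : 0 ≤ θ) (h : θ ≤ 1 / 2) (a b : ℕ) :
    (1 - (1 - θ) ^ a) ^ b ≤ exp (2 * θ * a - log b) := by
  set p := (1 - θ) ^ a
  have hp1 : p ≤ 1 := pow_le_one₀ (by linarith) (by linarith)
  have hbp : log b - 2 * θ * a ≤ b * p := by
    rcases Nat.eq_zero_or_pos b with rfl | hb
    · simp only [Nat.cast_zero, log_zero, zero_mul, zero_sub, neg_nonpos]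
      positivity
    calc log b - 2 * θ * a ≤ exp (log b - 2 * θ * a) := by
          linarith [add_one_le_exp (log b - 2 * θ * a)]
      _ = b * exp (-(2 * θ)) ^ a := by
          rw [exp_sub, exp_log (by exact_mod_cast hb), ← exp_nat_mul, div_eq_mul_inv, ← exp_neg]
          ring_nf
      _ ≤ b * p := by
          gcongr
          exact pow_le_pow_left₀ (exp_pos _).le (exp_neg_two_mul_le_one_sub h0 h) a
  calc (1 - p) ^ b ≤ exp (-p) ^ b :=
        pow_le_pow_left₀ (sub_nonneg.2 hp1) (one_sub_le_exp_neg p) b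
    _ = exp (-(b * p)) := by rw [← exp_nat_mul]; ring_nf
    _ ≤ exp (2 * θ * a - log b) := exp_le_exp.2 (by linarith)

theorem pow_mul_one_sub_pow_nonneg {θ : ℝ} (h0 : 0 ≤ θ) (h1 : θ ≤ 1) (a b : ℕ) :
    0 ≤ θ ^ a * (1 - θ) ^ b :=
  mul_nonneg (pow_nonneg h0 a) (pow_nonneg (sub_nonneg.2 h1) b)

section RandomSubset

open Finset

variable {α : Type*} (U : Finset α) {θ : ℝ}

theorem prRandomSubset_congr {E E' : Finset α → Prop} (h : ∀ A ⊆ U, E A ↔ E' A) :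
    prRandomSubset U θ E = prRandomSubset U θ E' :=
  sum_congr rfl fun A hA => by classical exact if_congr (h A (mem_powerset.1 hA)) rfl rfl

theorem prRandomSubset_nonneg (h0 : 0 ≤ θ) (h1 : θ ≤ 1) (E : Finset α → Prop) :
    0 ≤ prRandomSubset U θ E :=
  sum_nonneg fun A _ => by
    split_ifs
    exacts [pow_mul_one_sub_pow_nonneg h0 h1 _ _, le_rfl]

theorem prRandomSubset_mono (h0 : 0 ≤ θ) (h1 : θ ≤ 1) {E E' : Finset α → Prop}
    (h : ∀ A, E A → E' A) :
    prRandomSubset U θ E ≤ prRandomSubset U θ E' :=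
  sum_le_sum fun A _ => by
    split_ifs with hE hE'
    exacts [le_rfl, absurd (h A hE) hE', pow_mul_one_sub_pow_nonneg h0 h1 _ _, le_rfl]

theorem prRandomSubset_true : prRandomSubset U θ (fun _ => True) = 1 := by
  classical
  have h := prod_add (fun _ => θ) (fun _ => 1 - θ) U
  simp only [add_sub_cancel, prod_const, one_pow] at h
  rw [h, prRandomSubset]
  refine sum_congr rfl fun A hA => ?_
  rw [if_pos trivial, card_sdiff_of_subset (mem_powerset.1 hA)]

theorem prRandomSubset_add_not (E : Finset α → Prop) :
    prRandomSubset U θ E + prRandomSubset U θ (fun A => ¬ E A) = 1 := by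
  rw [← prRandomSubset_true U (θ := θ), prRandomSubset, prRandomSubset, prRandomSubset,
    ← sum_add_distrib]
  refine sum_congr rfl fun A _ => ?_
  by_cases hE : E A <;> simp [hE]

theorem prRandomSubset_exists_le_sum (h0 : 0 ≤ θ) (h1 : θ ≤ 1) {ι : Type*} (s : Finset ι)
    (E : ι → Finset α → Prop) :
    prRandomSubset U θ (fun A => ∃ j ∈ s, E j A) ≤ ∑ j ∈ s, prRandomSubset U θ (E j) := by
  have hw := pow_mul_one_sub_pow_nonneg h0 h1
  simp only [prRandomSubset]
  rw [sum_comm]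
  refine sum_le_sum fun A _ => ?_
  split_ifs with h
  · obtain ⟨j, hj, hE⟩ := h
    classical
    refine (if_pos hE).symm.le.trans
      (single_le_sum (f := fun j => if E j A then θ ^ #A * (1 - θ) ^ (#U - #A) else 0)
        (fun j _ => ?_) hj)
    split_ifs
    exacts [hw _ _, le_rfl]
  · exact sum_nonneg fun j _ => by split_ifs; exacts [hw _ _, le_rfl]

theorem prRandomSubset_union_inter_and [DecidableEq α] {S T : Finset α} (hST : Disjoint S T)
    (Q R : Finset α → Prop) :
    prRandomSubset (S ∪ T) θ (fun A => Q (A ∩ S) ∧ R (A ∩ T)) =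
      prRandomSubset S θ Q * prRandomSubset T θ R := by
  rw [prRandomSubset, prRandomSubset, prRandomSubset, sum_mul_sum, ← sum_product']
  have hBS : ∀ B C, B ⊆ S → C ⊆ T → (B ∪ C) ∩ S = B := fun B C hB hC => by
    rw [union_inter_distrib_right, inter_eq_left.2 hB,
      disjoint_iff_inter_eq_empty.1 (hST.symm.mono_left hC), union_empty]
  have hCT : ∀ B C, B ⊆ S → C ⊆ T → (B ∪ C) ∩ T = C := fun B C hB hC => by
    rw [union_inter_distrib_right, inter_eq_left.2 hC,
      disjoint_iff_inter_eq_empty.1 (hST.mono_left hB), empty_union]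
  -- `A ↦ (A ∩ S, A ∩ T)` identifies subsets of `S ∪ T` with pairs, and the weight factors.
  symm
  refine sum_nbij' (fun p => p.1 ∪ p.2) (fun A => (A ∩ S, A ∩ T)) ?_ ?_ ?_ ?_ ?_
  · simp only [mem_product, mem_powerset, and_imp, Prod.forall]
    exact fun B C hB hC => union_subset_union hB hC
  · simp only [mem_powerset, mem_product]
    exact fun A _ => ⟨inter_subset_right, inter_subset_right⟩
  · simp only [mem_product, mem_powerset, and_imp, Prod.forall, Prod.mk.injEq]
    exact fun B C hB hC => ⟨hBS B C hB hC, hCT B C hB hC⟩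
  · intro A hA
    simp only [← inter_union_distrib_left, inter_eq_left.2 (mem_powerset.1 hA)]
  · simp only [mem_product, mem_powerset, and_imp, Prod.forall]
    intro B C hB hC
    have hcard : #(B ∪ C) = #B + #C := card_union_of_disjoint (hST.mono hB hC)
    have hsub : #S + #T - (#B + #C) = (#S - #B) + (#T - #C) := by
      have := card_le_card hB; have := card_le_card hC; omega
    rw [hBS B C hB hC, hCT B C hB hC, ite_zero_mul_ite_zero, card_union_of_disjoint hST, hcard,
      hsub]
    split_ifs <;> ring

theorem prRandomSubset_biUnion_forall [DecidableEq α] {ι : Type*} [DecidableEq ι] (s : Finset ι)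
    (P : ι → Finset α) (hP : (s : Set ι).PairwiseDisjoint P) (Q : ι → Finset α → Prop) :
    prRandomSubset (s.biUnion P) θ (fun A => ∀ j ∈ s, Q j (A ∩ P j)) =
      ∏ j ∈ s, prRandomSubset (P j) θ (Q j) := by
  induction s using Finset.induction_on with
  | empty => simp [prRandomSubset]
  | insert a s ha ih =>
    have hdisj : Disjoint (P a) (s.biUnion P) := (disjoint_biUnion_right _ _ _).2 fun j hj =>
      hP (mem_insert_self a s) (mem_insert_of_mem hj) (ne_of_mem_of_not_mem hj ha).symm
    rw [biUnion_insert, prod_insert ha, ← ih (hP.subset (by simp)),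
      ← prRandomSubset_union_inter_and hdisj]
    refine prRandomSubset_congr _ fun A _ => ?_
    simp only [mem_insert, forall_eq_or_imp]
    refine and_congr_right' (forall₂_congr fun j hj => ?_)
    rw [inter_assoc, inter_eq_right.2 (subset_biUnion_of_mem P hj)]

theorem prRandomSubset_eq_empty : prRandomSubset U θ (· = ∅) = (1 - θ) ^ #U := by
  rw [prRandomSubset, sum_eq_single_of_mem ∅ (empty_mem_powerset U)]
  · simp
  · exact fun A _ hA => if_neg hA

theorem prRandomSubset_nonempty : prRandomSubset U θ Finset.Nonempty = 1 - (1 - θ) ^ #U := by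
  rw [← prRandomSubset_eq_empty, ← prRandomSubset_add_not U (· = ∅), add_sub_cancel_left]
  exact prRandomSubset_congr U fun A _ => nonempty_iff_ne_empty

theorem prRandomSubset_disjoint [DecidableEq α] {T : Finset α} (hT : T ⊆ U) :
    prRandomSubset U θ (fun A => Disjoint A T) = (1 - θ) ^ #T := by
  calc prRandomSubset U θ (fun A => Disjoint A T)
      = prRandomSubset ((U \ T) ∪ T) θ (fun A => True ∧ A ∩ T = ∅) := by
        rw [sdiff_union_of_subset hT]
        exact prRandomSubset_congr U fun A _ => by rw [true_and, disjoint_iff_inter_eq_empty]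
    _ = (1 - θ) ^ #T := by
        rw [prRandomSubset_union_inter_and sdiff_disjoint (fun _ => True) (· = ∅),
          prRandomSubset_true, prRandomSubset_eq_empty, one_mul]

end RandomSubset

def IsBlocking (K : Type*) {V : Type*} [Field K] [AddCommGroup V] [Module K V] (m : ℕ)
    (A : Finset V) : Prop :=
  ∀ S : Set V, IsFlat K m S → ∃ x ∈ A, x ∈ S

section Flats

open Finset Module

variable {K V : Type*} [Field K] [AddCommGroup V] [Module K V] {m : ℕ}

theorem exists_submodule_finrank_eq [FiniteDimensional K V] (h : m ≤ finrank K V) :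
    ∃ W : Submodule K V, finrank K W = m := by
  obtain ⟨f, hf⟩ := exists_linearIndependent_of_le_finrank h
  exact ⟨Submodule.span K (Set.range f), by rw [finrank_span_eq_card hf, Fintype.card_fin]⟩

theorem IsFlat.exists_span_eq [FiniteDimensional K V] {S : Set V} (hS : IsFlat K m S) :
    ∃ f : Fin m → V, ∃ v : V, S = (v + ·) '' Submodule.span K (Set.range f) := by
  obtain ⟨W, hW, v, rfl⟩ := hS
  let b := Module.finBasisOfFinrankEq K W hW
  refine ⟨W.subtype ∘ b, v, ?_⟩
  rw [Set.range_comp, Submodule.span_image, b.span_eq, Submodule.map_subtype_top]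

theorem IsFlat.ncard_eq [Fintype K] [Finite V] {S : Set V} (hS : IsFlat K m S) :
    S.ncard = Fintype.card K ^ m := by
  obtain ⟨W, rfl, v, rfl⟩ := hS
  rw [Set.ncard_image_of_injective _ (add_right_injective v), ← Nat.card_coe_set_eq,
    SetLike.coe_sort_coe, Module.natCard_eq_pow_finrank (K := K), Nat.card_eq_fintype_card]

theorem isFlat_preimage_mkQ {W : Submodule K V} (hW : finrank K W = m) (c : V ⧸ W) :
    IsFlat K m (W.mkQ ⁻¹' {c}) := by
  obtain ⟨v, rfl⟩ := W.mkQ_surjective c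
  refine ⟨W, hW, v, Set.ext fun x => ?_⟩
  simp only [Set.mem_preimage, Set.mem_singleton_iff, Submodule.mkQ_apply,
    Submodule.Quotient.eq, Set.mem_image, SetLike.mem_coe]
  exact ⟨fun h => ⟨x - v, h, add_sub_cancel v x⟩, by rintro ⟨w, hw, rfl⟩; simpa using hw⟩

variable [Fintype K] [Fintype V] {θ : ℝ}

theorem prRandomSubset_isBlocking_le (h0 : 0 ≤ θ) (h1 : θ ≤ 1) {W : Submodule K V}
    (hW : finrank K W = m) :
    prRandomSubset (univ : Finset V) θ (IsBlocking K m) ≤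
      (1 - (1 - θ) ^ (Fintype.card K ^ m)) ^ Nat.card (V ⧸ W) := by
  classical
  let coset : V ⧸ W → Finset V := fun c => univ.filter (W.mkQ · = c)
  have hcoset : ∀ c, (coset c : Set V) = W.mkQ ⁻¹' {c} := fun c => by
    ext x; simp only [coset, mem_coe, mem_filter, mem_univ, true_and]; rfl
  calc prRandomSubset (univ : Finset V) θ (IsBlocking K m)
      ≤ prRandomSubset ((univ : Finset (V ⧸ W)).biUnion coset) θ
          (fun A => ∀ c ∈ univ, (A ∩ coset c).Nonempty) := by
        rw [biUnion_filter_eq_of_maps_to fun x _ => mem_univ (W.mkQ x)]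
        refine prRandomSubset_mono _ h0 h1 fun A hA c _ => ?_
        obtain ⟨x, hxA, hx⟩ := hA _ (hcoset c ▸ isFlat_preimage_mkQ hW c)
        exact ⟨x, mem_inter.2 ⟨hxA, hx⟩⟩
    _ = ∏ c : V ⧸ W, (1 - (1 - θ) ^ (Fintype.card K ^ m)) := by
        refine (prRandomSubset_biUnion_forall univ coset
          (Set.pairwiseDisjoint_filter W.mkQ _ univ) _).trans (prod_congr rfl fun c _ => ?_)
        rw [prRandomSubset_nonempty, ← Set.ncard_coe_finset, hcoset,
          (isFlat_preimage_mkQ hW c).ncard_eq]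
    _ = (1 - (1 - θ) ^ (Fintype.card K ^ m)) ^ Nat.card (V ⧸ W) := by
        rw [prod_const, card_univ, Nat.card_eq_fintype_card]

theorem prRandomSubset_not_isBlocking_le (h0 : 0 ≤ θ) (h1 : θ ≤ 1) :
    prRandomSubset (univ : Finset V) θ (fun A => ¬ IsBlocking K m A) ≤
      (Fintype.card V : ℝ) ^ (m + 1) * (1 - θ) ^ (Fintype.card K ^ m) := by
  classical
  let flats : Finset (Set V) := univ.filter (IsFlat K m)
  have hflats : #flats ≤ Fintype.card V ^ (m + 1) :=
    calc #flats ≤ #(univ : Finset ((Fin m → V) × V)) :=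
          card_le_card_of_surjOn (fun j => (j.2 + ·) '' Submodule.span K (Set.range j.1))
            fun S hS => by
              obtain ⟨f, v, rfl⟩ := (mem_filter.1 hS).2.exists_span_eq
              exact ⟨(f, v), mem_univ _, rfl⟩
      _ = Fintype.card V ^ (m + 1) := by
          simp [Fintype.card_prod, pow_succ]
  calc prRandomSubset (univ : Finset V) θ (fun A => ¬ IsBlocking K m A)
      ≤ prRandomSubset (univ : Finset V) θ (fun A => ∃ S ∈ flats, Disjoint A S.toFinset) := by
        refine prRandomSubset_mono _ h0 h1 fun A hA => ?_
        simp only [IsBlocking, not_forall, not_exists, not_and] at hA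
        obtain ⟨S, hS, hAS⟩ := hA
        exact ⟨S, mem_filter.2 ⟨mem_univ S, hS⟩,
          disjoint_left.2 fun x hx hxS => hAS x hx (Set.mem_toFinset.1 hxS)⟩
    _ ≤ ∑ S ∈ flats, prRandomSubset (univ : Finset V) θ (fun A => Disjoint A S.toFinset) :=
        prRandomSubset_exists_le_sum _ h0 h1 _ _
    _ = #flats * (1 - θ) ^ (Fintype.card K ^ m) := by
        rw [← nsmul_eq_mul, ← sum_const]
        refine sum_congr rfl fun S hS => ?_
        rw [prRandomSubset_disjoint _ (subset_univ _), ← Set.ncard_eq_toFinset_card',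
          (mem_filter.1 hS).2.ncard_eq]
    _ ≤ (Fintype.card V : ℝ) ^ (m + 1) * (1 - θ) ^ (Fintype.card K ^ m) := by
        gcongr
        exact_mod_cast hflats

theorem prRandomSubset_isBlocking_le_exp (h0 : 0 ≤ θ) (hθ : θ ≤ 1 / 2) (hm : m ≤ finrank K V) :
    prRandomSubset (univ : Finset V) θ (IsBlocking K m) ≤
      Real.exp (2 * θ * (Fintype.card K : ℝ) ^ m -
        ((finrank K V : ℝ) - m) * Real.log (Fintype.card K)) := by
  obtain ⟨W, hW⟩ := exists_submodule_finrank_eq hm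
  have hquot : Nat.card (V ⧸ W) = Fintype.card K ^ (finrank K V - m) := by
    rw [Module.natCard_eq_pow_finrank (K := K), Submodule.finrank_quotient, hW,
      Nat.card_eq_fintype_card]
  refine (prRandomSubset_isBlocking_le h0 (by linarith) hW).trans ?_
  refine (Real.one_sub_one_sub_pow_pow_le_exp h0 hθ _ _).trans_eq ?_
  simp only [hquot, Nat.cast_pow, Real.log_pow, Nat.cast_sub hm]

theorem prRandomSubset_not_isBlocking_le_exp (h0 : 0 ≤ θ) (h1 : θ ≤ 1) :
    prRandomSubset (univ : Finset V) θ (fun A => ¬ IsBlocking K m A) ≤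
      Real.exp ((m + 1) * finrank K V * Real.log (Fintype.card K) -
        θ * (Fintype.card K : ℝ) ^ m) := by
  have hq : (0 : ℝ) < Fintype.card K := by exact_mod_cast Fintype.card_pos
  refine (prRandomSubset_not_isBlocking_le h0 h1).trans ?_
  calc (Fintype.card V : ℝ) ^ (m + 1) * (1 - θ) ^ (Fintype.card K ^ m)
      ≤ (Fintype.card V : ℝ) ^ (m + 1) * Real.exp (-θ) ^ (Fintype.card K ^ m) := by
        gcongr
        exact Real.one_sub_le_exp_neg θ
    _ = Real.exp (((finrank K V * (m + 1) : ℕ) : ℝ) * Real.log (Fintype.card K) +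
          ((Fintype.card K ^ m : ℕ) : ℝ) * (-θ)) := by
        rw [Real.exp_add, Real.exp_nat_mul, Real.exp_nat_mul, Real.exp_log hq,
          Module.card_eq_pow_finrank (K := K), Nat.cast_pow, pow_mul]
    _ = _ := by push_cast; ring_nf

end Flats

theorem Asymptotics.IsLittleO.eventually_le_mul {ι : Type*} {l : Filter ι} {f g : ι → ℝ}
    (h : f =o[l] g) (hg : ∀ i, 0 ≤ g i) {c : ℝ} (hc : 0 < c) : ∀ᶠ i in l, f i ≤ c * g i := by
  filter_upwards [h.def hc] with i hi
  rw [Real.norm_of_nonneg (hg i)] at hi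
  exact (le_abs_self _).trans hi

section Threshold

open Finset Module

variable {F : Type*} [Field F] [Fintype F] {n m : ℕ} {θ : ℝ}

theorem prRandomSubset_isBlocking_le_of_sparse (hmn : 2 * m < n) (h0 : 0 ≤ θ)
    (hθ : θ ≤ 1 / 16 * (n * Real.log (Fintype.card F) / (Fintype.card F : ℝ) ^ m))
    (hn : (n : ℝ) ≤ (Fintype.card F : ℝ) ^ m / Real.log (Fintype.card F)) :
    prRandomSubset (univ : Finset (Fin n → F)) θ (IsBlocking F m) ≤
      Real.exp (-(Real.log (Fintype.card F) / 2)) := by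
  set q : ℝ := (Fintype.card F : ℝ)
  have hL : 0 < Real.log q := Real.log_pos (Nat.one_lt_cast.2 Fintype.one_lt_card)
  have hqm : 0 < q ^ m := by positivity
  have hθq : 16 * θ * q ^ m ≤ n * Real.log q := by
    rw [mul_div_assoc', le_div_iff₀ hqm] at hθ
    linarith
  have hnL : n * Real.log q ≤ q ^ m := (le_div_iff₀ hL).1 hn
  have hθ2 : θ ≤ 1 / 2 := by nlinarith
  have hn' : (2 * m + 1 : ℝ) ≤ n := by exact_mod_cast hmn
  refine (prRandomSubset_isBlocking_le_exp h0 hθ2 (by rw [finrank_fin_fun]; omega)).trans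
    (Real.exp_le_exp.2 ?_)
  rw [finrank_fin_fun]
  nlinarith [mul_le_mul_of_nonneg_left hn' hL.le]

theorem prRandomSubset_not_isBlocking_le_of_dense (hmn : m < n) (h0 : 0 ≤ θ) (h1 : θ ≤ 1)
    (hθ : n * Real.log (Fintype.card F) / (Fintype.card F : ℝ) ^ m ≤ ((m : ℝ) + 2)⁻¹ * θ) :
    prRandomSubset (univ : Finset (Fin n → F)) θ (fun A => ¬ IsBlocking F m A) ≤
      Real.exp (-Real.log (Fintype.card F)) := by
  set q : ℝ := (Fintype.card F : ℝ)
  have hL : 0 < Real.log q := Real.log_pos (Nat.one_lt_cast.2 Fintype.one_lt_card)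
  have hqm : 0 < q ^ m := by positivity
  have hθq : (m + 2) * (n * Real.log q) ≤ θ * q ^ m := by
    rwa [div_le_iff₀ hqm, mul_assoc, le_inv_mul_iff₀ (by positivity)] at hθ
  have hn : (1 : ℝ) ≤ n := by exact_mod_cast hmn.pos
  refine (prRandomSubset_not_isBlocking_le_exp h0 h1).trans (Real.exp_le_exp.2 ?_)
  rw [finrank_fin_fun]
  nlinarith [mul_le_mul_of_nonneg_right hn hL.le]

end Threshold

theorem stmt9_general (n q : ℕ → ℕ) (F : ℕ → Type) [∀ i, Field (F i)] [∀ i, Fintype (F i)]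
    (m : ℕ) (hmn : ∀ i, 2 * m < n i)
    (hq : ∀ i, Fintype.card (F i) = q i)
    (hqtop : Tendsto q atTop atTop)
    (hno : (fun i => (n i : ℝ)) =o[atTop] fun i => (q i : ℝ) ^ m / Real.log (q i))
    (θ : ℕ → ℝ) (hθ : ∀ i, 0 ≤ θ i ∧ θ i ≤ 1) :
    (θ =o[atTop] (fun i => (n i : ℝ) * Real.log (q i) / (q i : ℝ) ^ m) →
      Tendsto (fun i => prRandomSubset (Finset.univ : Finset (Fin (n i) → F i)) (θ i)
        (fun A => ∀ S : Set (Fin (n i) → F i), IsFlat (F i) m S →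
          ∃ x ∈ A, x ∈ S)) atTop (nhds 0)) ∧
    ((fun i => (n i : ℝ) * Real.log (q i) / (q i : ℝ) ^ m) =o[atTop] θ →
      Tendsto (fun i => prRandomSubset (Finset.univ : Finset (Fin (n i) → F i)) (θ i)
        (fun A => ∀ S : Set (Fin (n i) → F i), IsFlat (F i) m S →
          ∃ x ∈ A, x ∈ S)) atTop (nhds 1)) := by
  obtain rfl : q = fun i => Fintype.card (F i) := funext fun i => (hq i).symm
  have hlog : Tendsto (fun i => Real.log (Fintype.card (F i))) atTop atTop :=
    Real.tendsto_log_atTop.comp (tendsto_natCast_atTop_atTop.comp hqtop)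
  have hnonneg : ∀ i E, 0 ≤ prRandomSubset Finset.univ (θ i) E := fun i =>
    prRandomSubset_nonneg (Finset.univ : Finset (Fin (n i) → F i)) (hθ i).1 (hθ i).2
  refine ⟨fun hsparse => ?_, fun hdense => ?_⟩
  · refine squeeze_zero' (Eventually.of_forall fun i => hnonneg i _)
      ?_ (Real.tendsto_exp_neg_atTop_nhds_zero.comp (hlog.atTop_div_const two_pos))
    filter_upwards [hsparse.eventually_le_mul (fun i => by positivity) (c := 1 / 16) (by norm_num),
      hno.eventually_le_mul (fun i => by positivity) one_pos] with i hθi hni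
    exact prRandomSubset_isBlocking_le_of_sparse (hmn i) (hθ i).1 hθi (by rwa [one_mul] at hni)
  · have hnot : Tendsto (fun i => prRandomSubset (Finset.univ : Finset (Fin (n i) → F i)) (θ i)
        (fun A => ¬ IsBlocking (F i) m A)) atTop (nhds 0) := by
      refine squeeze_zero' (Eventually.of_forall fun i => hnonneg i _)
        ?_ (Real.tendsto_exp_neg_atTop_nhds_zero.comp hlog)
      filter_upwards [hdense.eventually_le_mul (fun i => (hθ i).1) (c := ((m : ℝ) + 2)⁻¹)
        (by positivity)] with i hi
      exact prRandomSubset_not_isBlocking_le_of_dense ((Nat.le_mul_of_pos_left m two_pos).trans_lt (hmn i)) (hθ i).1 (hθ i).2 hi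
    have hblock := (tendsto_const_nhds (x := (1 : ℝ))).sub hnot
    rw [sub_zero] at hblock
    exact hblock.congr fun i => sub_eq_of_eq_add (prRandomSubset_add_not _ _).symm

theorem stmt9 (n q : ℕ → ℕ) (F : ℕ → Type) [∀ i, Field (F i)] [∀ i, Fintype (F i)]
    (m : ℕ) (hm : 1 ≤ m) (hmn : ∀ i, 2 * m < n i)
    (hq : ∀ i, Fintype.card (F i) = q i) (hqpp : ∀ i, IsPrimePow (q i))
    (hqtop : Tendsto q atTop atTop)
    (hno : (fun i => (n i : ℝ)) =o[atTop] fun i => (q i : ℝ) ^ m / Real.log (q i))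
    (θ : ℕ → ℝ) (hθ : ∀ i, 0 ≤ θ i ∧ θ i ≤ 1) :
    (θ =o[atTop] (fun i => (n i : ℝ) * Real.log (q i) / (q i : ℝ) ^ m) →
      Tendsto (fun i => prRandomSubset (Finset.univ : Finset (Fin (n i) → F i)) (θ i)
        (fun A => ∀ S : Set (Fin (n i) → F i), IsFlat (F i) m S →
          ∃ x ∈ A, x ∈ S)) atTop (nhds 0)) ∧
    ((fun i => (n i : ℝ) * Real.log (q i) / (q i : ℝ) ^ m) =o[atTop] θ →
      Tendsto (fun i => prRandomSubset (Finset.univ : Finset (Fin (n i) → F i)) (θ i)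
        (fun A => ∀ S : Set (Fin (n i) → F i), IsFlat (F i) m S →
          ∃ x ∈ A, x ∈ S)) atTop (nhds 1)) :=
  stmt9_general n q F m hmn hq hqtop hno θ hθ
end

section
/- Let m, n be integers with 0 ≤ m < n, q a prime power, and let 𝓕 be the family of all m-flats in F_q^n, each viewed as its set of q^m points. For 0 ≤ d < m, let I_{q^d}(𝓕) = {(S,T) ∈ 𝓕 × 𝓕 : |S ∩ T| = q^d} be the set of ordered pairs of m-flats intersecting in exactly q^d points (i.e., in a d-flat). Then |I_{q^d}(𝓕)| ≤ 64·q^{(n−d)(d+1)+2(n−m)(m−d)}; moreover, |I_k(𝓕)| = 0 for every k ≥ 1 that is not of the form q^d for some 0 ≤ d ≤ m. -/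
/-!
Two flats with a common point `p` are `p + W₁` and `p + W₂`, and they meet in `p + (W₁ ⊓ W₂)`,
which has `q ^ dim (W₁ ⊓ W₂)` points with `dim (W₁ ⊓ W₂) ≤ m`: this is the second claim. If the
intersection has `q ^ d` points, the pair is determined by the `d`-dimensional subspace
`U = W₁ ⊓ W₂`, the class of `p` in `V ⧸ U` (`q ^ (n - d)` choices) and two `m`-dimensional
subspaces containing `U`, i.e. two `(m - d)`-dimensional subspaces of `V ⧸ U`. An `N`-dimensional
space has at most `4 q ^ (r (N - r))` subspaces of dimension `r`: it has at most `q ^ (N r)`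
linearly independent `r`-tuples, while each such subspace has `∏_{i<r} (q ^ r - q ^ i)` ordered
bases, at least `q ^ (r r) / 4` because `∏_{j ≥ 1} (1 - q ^ (-j)) ≥ 1 / 4` for `q ≥ 2`.
-/

open Filter Asymptotics

open Finset Module

lemma quarter_add_pow_le_prod_one_sub_pow {x : ℝ} (hx₀ : 0 ≤ x) (hx : x ≤ 1 / 2) :
    ∀ r : ℕ, 1 / 4 + x ^ (r + 1) ≤ ∏ j ∈ range r, (1 - x ^ (j + 1))
  | 0 => by rw [prod_range_zero]; linarith
  | 1 => by rw [prod_range_one]; nlinarith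
  | r + 2 => by
    have ih := quarter_add_pow_le_prod_one_sub_pow hx₀ hx (r + 1)
    set y := x ^ (r + 2)
    have hy₀ : 0 ≤ y := by positivity
    have hy : y ≤ 1 / 4 :=
      calc y ≤ x ^ 2 := pow_le_pow_of_le_one hx₀ (by linarith) (by omega)
        _ ≤ (1 / 2) ^ 2 := by gcongr
        _ = 1 / 4 := by norm_num
    have hxy : x ^ (r + 2 + 1) = x * y := by ring
    rw [prod_range_succ, hxy]
    nlinarith [mul_le_mul_of_nonneg_right ih (by linarith : 0 ≤ 1 - y),
      mul_nonneg hy₀ (by linarith : 0 ≤ 3 / 4 - y - x)]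

lemma pow_mul_self_le_four_mul_prod {q : ℕ} (hq : 2 ≤ q) (r : ℕ) :
    q ^ (r * r) ≤ 4 * ∏ i : Fin r, (q ^ r - q ^ (i : ℕ)) := by
  set x : ℝ := (q : ℝ)⁻¹
  have hq₀ : (0 : ℝ) < q := by positivity
  have hx₀ : 0 ≤ x := by positivity
  have hx : x ≤ 1 / 2 := by
    rw [one_div]; exact inv_anti₀ (by norm_num) (by exact_mod_cast hq)
  have hpow (i k : ℕ) : (q : ℝ) ^ (i + k) * x ^ k = q ^ i := by
    rw [pow_add, mul_assoc, ← mul_pow, mul_inv_cancel₀ hq₀.ne', one_pow, mul_one]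
  have hfactor (i : Fin r) : ((q ^ r - q ^ (i : ℕ) : ℕ) : ℝ) = q ^ r * (1 - x ^ (r - i)) := by
    have hqi := hpow i (r - i)
    rw [Nat.add_sub_cancel' i.2.le] at hqi
    rw [Nat.cast_sub (Nat.pow_le_pow_right (by omega) i.2.le), mul_one_sub, hqi]
    norm_cast
  have hreflect : ∏ i : Fin r, (1 - x ^ (r - i)) = ∏ j ∈ range r, (1 - x ^ (j + 1)) := by
    rw [Fin.prod_univ_eq_prod_range (fun i ↦ 1 - x ^ (r - i)),
      ← prod_range_reflect (fun j ↦ 1 - x ^ (j + 1))]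
    refine prod_congr rfl fun j hj ↦ ?_
    rw [mem_range] at hj
    congr 2; omega
  have hprod := quarter_add_pow_le_prod_one_sub_pow hx₀ hx r
  rw [← Nat.cast_le (α := ℝ)]
  push_cast [hfactor, prod_mul_distrib, hreflect]
  rw [prod_const, card_univ, Fintype.card_fin, ← pow_mul]
  nlinarith [pow_pos hq₀ (r * r), pow_pos (hx₀.lt_of_ne' (by positivity)) (r + 1)]

section Grassmannian

variable {K V : Type*} [Field K] [AddCommGroup V] [Module K V] [Finite V]

lemma span_range_subtype_comp_eq {W : Submodule K V} {ι : Type*} [Fintype ι] {b : ι → W}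
    (hb : LinearIndependent K b) (hcard : Fintype.card ι = finrank K W) :
    Submodule.span K (Set.range (W.subtype ∘ b)) = W := by
  rw [Set.range_comp, Submodule.span_image, hb.span_eq_top_of_card_eq_finrank' hcard,
    Submodule.map_subtype_top]

lemma Submodule.finrank_map_mkQ_of_le {U W : Submodule K V} (h : U ≤ W) :
    finrank K (W.map U.mkQ) = finrank K W - finrank K U := by
  have hiso := (Submodule.quotientQuotientEquivQuotient U W h).finrank_eq
  have h₁ := (W.map U.mkQ).finrank_quotient_add_finrank
  have h₂ := U.finrank_quotient_add_finrank
  have h₃ := W.finrank_quotient_add_finrank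
  omega

variable [Fintype K]

lemma card_submodule_finrank_eq_mul_le_card_linearIndependent (r : ℕ) :
    Nat.card {W : Submodule K V // finrank K W = r} *
        ∏ i : Fin r, (Fintype.card K ^ r - Fintype.card K ^ (i : ℕ)) ≤
      Nat.card {b : Fin r → V // LinearIndependent K b} := by
  have hfiber (W : {W : Submodule K V // finrank K W = r}) :
      Nat.card {b : Fin r → W.1 // LinearIndependent K b} =
        ∏ i : Fin r, (Fintype.card K ^ r - Fintype.card K ^ (i : ℕ)) := by
    obtain ⟨W, rfl⟩ := W
    exact card_linearIndependent le_rfl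
  let f : (Σ W : {W : Submodule K V // finrank K W = r},
      {b : Fin r → W.1 // LinearIndependent K b}) → {b : Fin r → V // LinearIndependent K b} :=
    fun x ↦ ⟨x.1.1.subtype ∘ x.2.1, x.2.2.map' _ (Submodule.ker_subtype _)⟩
  have hf : Function.Injective f := by
    rintro ⟨⟨W, hW⟩, b, hb⟩ ⟨⟨W', hW'⟩, b', hb'⟩ h
    have hbb' : W.subtype ∘ b = W'.subtype ∘ b' := congrArg Subtype.val h
    obtain rfl : W = W' :=
      calc W = Submodule.span K (Set.range (W.subtype ∘ b)) :=
            (span_range_subtype_comp_eq hb (by simp [hW])).symm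
        _ = Submodule.span K (Set.range (W'.subtype ∘ b')) := by rw [hbb']
        _ = W' := span_range_subtype_comp_eq hb' (by simp [hW'])
    obtain rfl : b = b' := funext fun i ↦ Subtype.ext (congrFun hbb' i)
    rfl
  calc _ = Nat.card (Σ W : {W : Submodule K V // finrank K W = r},
        {b : Fin r → W.1 // LinearIndependent K b}) := by
        cases nonempty_fintype {W : Submodule K V // finrank K W = r}
        simp [Nat.card_sigma, hfiber]
    _ ≤ _ := Nat.card_le_card_of_injective f hf

theorem card_submodule_finrank_eq_le (r : ℕ) :
    Nat.card {W : Submodule K V // finrank K W = r} ≤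
      4 * Fintype.card K ^ (r * (finrank K V - r)) := by
  set q := Fintype.card K
  obtain hr | hr := le_or_gt r (finrank K V)
  · have hcount := card_submodule_finrank_eq_mul_le_card_linearIndependent (K := K) (V := V) r
    rw [card_linearIndependent hr] at hcount
    have hbound : ∏ i : Fin r, (q ^ finrank K V - q ^ (i : ℕ)) ≤ q ^ (finrank K V * r) := by
      rw [pow_mul]
      simpa using prod_le_pow_card univ (fun i : Fin r ↦ q ^ finrank K V - q ^ (i : ℕ))
        _ fun i _ ↦ Nat.sub_le _ _
    have hbases := pow_mul_self_le_four_mul_prod Fintype.one_lt_card r (q := q)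
    refine Nat.le_of_mul_le_mul_right (c := q ^ (r * r)) ?_ (by positivity)
    calc _ ≤ Nat.card {W : Submodule K V // finrank K W = r} *
          (4 * ∏ i : Fin r, (q ^ r - q ^ (i : ℕ))) := Nat.mul_le_mul_left _ hbases
      _ ≤ 4 * q ^ (finrank K V * r) := by
        rw [mul_left_comm]; exact Nat.mul_le_mul_left _ (hcount.trans hbound)
      _ = 4 * q ^ (r * (finrank K V - r)) * q ^ (r * r) := by
        rw [mul_assoc, ← pow_add, ← Nat.mul_add, Nat.sub_add_cancel hr, mul_comm r]
  · have : IsEmpty {W : Submodule K V // finrank K W = r} :=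
      ⟨fun ⟨W, hW⟩ ↦ (hW ▸ W.finrank_le).not_gt hr⟩
    simp

theorem card_submodule_ge_finrank_eq_le (U : Submodule K V) (r : ℕ) :
    Nat.card {W : Submodule K V // U ≤ W ∧ finrank K W = r} ≤
      4 * Fintype.card K ^ ((r - finrank K U) * (finrank K V - r)) := by
  have : Finite (V ⧸ U) := Quotient.finite _
  let f (W : {W : Submodule K V // U ≤ W ∧ finrank K W = r}) :
      {W' : Submodule K (V ⧸ U) // finrank K W' = r - finrank K U} :=
    ⟨W.1.map U.mkQ, by rw [Submodule.finrank_map_mkQ_of_le W.2.1, W.2.2]⟩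
  have hf : Function.Injective f := by
    rintro ⟨W, hUW, _⟩ ⟨W', hUW', _⟩ h
    have h' := congrArg (Submodule.comap U.mkQ ∘ Subtype.val) h
    simp only [f, Function.comp_apply, Submodule.comap_map_mkQ, sup_of_le_right hUW,
      sup_of_le_right hUW'] at h'
    exact Subtype.ext h'
  have hexp : (r - finrank K U) * (finrank K (V ⧸ U) - (r - finrank K U)) =
      (r - finrank K U) * (finrank K V - r) := by
    rw [Submodule.finrank_quotient]
    rcases le_total (finrank K U) r with hle | hle
    · congr 1; omega
    · simp [Nat.sub_eq_zero_of_le hle]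
  calc _ ≤ _ := Nat.card_le_card_of_injective f hf
    _ ≤ _ := card_submodule_finrank_eq_le _
    _ = _ := by rw [hexp]

end Grassmannian

section Translates

variable {R V : Type*} [Ring R] [AddCommGroup V] [Module R V] {W W₁ W₂ : Submodule R V} {v w p : V}

lemma mem_image_add_submodule_iff {x : V} : x ∈ (v + ·) '' (W : Set V) ↔ x - v ∈ W := by
  constructor
  · rintro ⟨w, hw, rfl⟩
    simpa using hw
  · exact fun h ↦ ⟨x - v, h, add_sub_cancel v x⟩

lemma image_add_submodule_eq_of_mem (hp : p ∈ (v + ·) '' (W : Set V)) :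
    (v + ·) '' (W : Set V) = (p + ·) '' (W : Set V) := by
  rw [mem_image_add_submodule_iff] at hp
  ext x
  rw [mem_image_add_submodule_iff, mem_image_add_submodule_iff,
    show x - p = (x - v) - (p - v) by abel, Submodule.sub_mem_iff_left _ hp]

lemma image_add_submodule_inter_eq
    (hp : p ∈ ((v + ·) '' (W₁ : Set V)) ∩ ((w + ·) '' (W₂ : Set V))) :
    ((v + ·) '' (W₁ : Set V)) ∩ ((w + ·) '' (W₂ : Set V)) =
      (p + ·) '' ((W₁ ⊓ W₂ : Submodule R V) : Set V) := by
  rw [image_add_submodule_eq_of_mem hp.1, image_add_submodule_eq_of_mem hp.2,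
    ← Set.image_inter (add_right_injective p), Submodule.coe_inf]

lemma ncard_image_add_submodule {K : Type*} [Field K] [Fintype K] [Module K V] [Finite V]
    (W : Submodule K V) (v : V) :
    ((v + ·) '' (W : Set V)).ncard = Fintype.card K ^ finrank K W := by
  rw [Set.ncard_image_of_injective _ (add_right_injective v), ← Nat.card_coe_set_eq,
    SetLike.coe_sort_coe, Module.natCard_eq_pow_finrank (K := K), Nat.card_eq_fintype_card]

end Translates

section Flats

variable {K V : Type*} [Field K] [Fintype K] [AddCommGroup V] [Module K V] [Finite V]

theorem IsFlat.exists_common_point_of_inter_nonempty {m m' : ℕ} {S T : Set V}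
    (hS : IsFlat K m S) (hT : IsFlat K m' T) (hST : (S ∩ T).Nonempty) :
    ∃ W₁ W₂ : Submodule K V, finrank K W₁ = m ∧ finrank K W₂ = m' ∧ ∃ p : V,
      S = (p + ·) '' (W₁ : Set V) ∧ T = (p + ·) '' (W₂ : Set V) ∧
      (S ∩ T).ncard = Fintype.card K ^ finrank K ↥(W₁ ⊓ W₂) := by
  obtain ⟨W₁, hW₁, v, rfl⟩ := hS
  obtain ⟨W₂, hW₂, w, rfl⟩ := hT
  obtain ⟨p, hp⟩ := hST
  exact ⟨W₁, W₂, hW₁, hW₂, p, image_add_submodule_eq_of_mem hp.1,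
    image_add_submodule_eq_of_mem hp.2,
    by rw [image_add_submodule_inter_eq hp, ncard_image_add_submodule]⟩

theorem IsFlat.exists_ncard_inter_eq_pow {m m' : ℕ} {S T : Set V} (hS : IsFlat K m S)
    (hT : IsFlat K m' T) (hST : (S ∩ T).ncard ≠ 0) :
    ∃ d ≤ m, (S ∩ T).ncard = Fintype.card K ^ d := by
  obtain ⟨W₁, W₂, hW₁, -, -, -, -, hcard⟩ :=
    hS.exists_common_point_of_inter_nonempty hT (Set.nonempty_of_ncard_ne_zero hST)
  exact ⟨_, hW₁ ▸ Submodule.finrank_mono inf_le_left, hcard⟩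

/-- A pair of flats `p + W₁`, `p + W₂` meeting in a `d`-flat, recorded by `U = W₁ ⊓ W₂`, the
class of `p` modulo `U`, and `W₁`, `W₂`. -/
abbrev FlatPairData (K V : Type*) [Field K] [AddCommGroup V] [Module K V] (m m' d : ℕ) :=
  Σ U : {U : Submodule K V // finrank K U = d}, (V ⧸ U.1) ×
    {W // U.1 ≤ W ∧ finrank K W = m} × {W // U.1 ≤ W ∧ finrank K W = m'}

noncomputable def FlatPairData.flats {m m' d : ℕ} (x : FlatPairData K V m m' d) :
    Set V × Set V :=
  ((x.2.1.out + ·) '' (x.2.2.1.1 : Set V), (x.2.1.out + ·) '' (x.2.2.2.1 : Set V))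

theorem card_flatPairs_le_card_flatPairData (m m' d : ℕ) :
    Nat.card {P : Set V × Set V //
        IsFlat K m P.1 ∧ IsFlat K m' P.2 ∧ (P.1 ∩ P.2).ncard = Fintype.card K ^ d} ≤
      Nat.card (FlatPairData K V m m' d) := by
  have (U : Submodule K V) : Finite (V ⧸ U) := Quotient.finite _
  let flats : FlatPairData K V m m' d → Set V × Set V := FlatPairData.flats
  have hrange : {P : Set V × Set V | IsFlat K m P.1 ∧ IsFlat K m' P.2 ∧
      (P.1 ∩ P.2).ncard = Fintype.card K ^ d} ⊆ Set.range flats := by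
    rintro ⟨S, T⟩ ⟨hS, hT, hST⟩
    obtain ⟨W₁, W₂, hW₁, hW₂, p, rfl, rfl, hcard⟩ := hS.exists_common_point_of_inter_nonempty hT
      (Set.nonempty_of_ncard_ne_zero (by rw [hST]; positivity))
    have hd : finrank K ↥(W₁ ⊓ W₂) = d :=
      Nat.pow_right_injective Fintype.one_lt_card (hcard.symm.trans hST)
    have hout : ((W₁ ⊓ W₂).mkQ p).out - p ∈ W₁ ⊓ W₂ :=
      (Submodule.Quotient.eq _).mp (Quotient.out_eq _)
    refine ⟨⟨⟨W₁ ⊓ W₂, hd⟩, (W₁ ⊓ W₂).mkQ p, ⟨W₁, inf_le_left, hW₁⟩, ⟨W₂, inf_le_right, hW₂⟩⟩, ?_⟩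
    simp only [flats, FlatPairData.flats, Prod.mk.injEq]
    constructor <;> refine (image_add_submodule_eq_of_mem ?_).symm <;>
      rw [mem_image_add_submodule_iff]
    exacts [(Submodule.mem_inf.mp hout).1, (Submodule.mem_inf.mp hout).2]
  calc _ = Nat.card {P : Set V × Set V | IsFlat K m P.1 ∧ IsFlat K m' P.2 ∧
        (P.1 ∩ P.2).ncard = Fintype.card K ^ d} := rfl
    _ ≤ Nat.card (Set.range flats) := Nat.card_mono (Set.finite_range _) hrange
    _ ≤ _ := Finite.card_range_le _

theorem card_flatPairData_le (m m' d : ℕ) :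
    Nat.card (FlatPairData K V m m' d) ≤
      4 * Fintype.card K ^ (d * (finrank K V - d)) * (Fintype.card K ^ (finrank K V - d) *
        (4 * Fintype.card K ^ ((m - d) * (finrank K V - m)) *
          (4 * Fintype.card K ^ ((m' - d) * (finrank K V - m'))))) := by
  have (U : Submodule K V) : Finite (V ⧸ U) := Quotient.finite _
  have hfiber (U : {U : Submodule K V // finrank K U = d}) :
      Nat.card ((V ⧸ U.1) × {W // U.1 ≤ W ∧ finrank K W = m} ×
        {W // U.1 ≤ W ∧ finrank K W = m'}) ≤
      Fintype.card K ^ (finrank K V - d) *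
        (4 * Fintype.card K ^ ((m - d) * (finrank K V - m)) *
          (4 * Fintype.card K ^ ((m' - d) * (finrank K V - m')))) := by
    obtain ⟨U, rfl⟩ := U
    rw [Nat.card_prod, Nat.card_prod, Module.natCard_eq_pow_finrank (K := K),
      Nat.card_eq_fintype_card, Submodule.finrank_quotient]
    gcongr <;> exact card_submodule_ge_finrank_eq_le U _
  cases nonempty_fintype {U : Submodule K V // finrank K U = d}
  rw [Nat.card_sigma]
  refine (sum_le_card_nsmul _ _ _ fun U _ ↦ hfiber U).trans ?_
  rw [smul_eq_mul, card_univ, ← Nat.card_eq_fintype_card]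
  gcongr
  exact card_submodule_finrank_eq_le d

end Flats

theorem stmt18_general (n m q : ℕ)
    (F : Type*) [Field F] [Fintype F] (hq : Fintype.card F = q) :
    (∀ d, d < m →
      Nat.card {p : Set (Fin n → F) × Set (Fin n → F) //
          IsFlat F m p.1 ∧ IsFlat F m p.2 ∧ (p.1 ∩ p.2).ncard = q ^ d}
        ≤ 64 * q ^ ((n - d) * (d + 1) + 2 * (n - m) * (m - d))) ∧
    (∀ k, 1 ≤ k → (¬ ∃ d ≤ m, k = q ^ d) →
      Nat.card {p : Set (Fin n → F) × Set (Fin n → F) //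
          IsFlat F m p.1 ∧ IsFlat F m p.2 ∧ (p.1 ∩ p.2).ncard = k} = 0) := by
  subst hq
  refine ⟨fun d _ ↦ ?_, fun k hk hk_pow ↦ ?_⟩
  · calc _ ≤ _ := card_flatPairs_le_card_flatPairData m m d
      _ ≤ _ := card_flatPairData_le m m d
      _ = _ := by rw [Module.finrank_fin_fun]; ring
  · refine Nat.card_eq_zero.mpr (.inl ⟨fun ⟨⟨S, T⟩, hS, hT, hST⟩ ↦ hk_pow ?_⟩)
    obtain ⟨d, hd, hpow⟩ := hS.exists_ncard_inter_eq_pow hT (by omega)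
    exact ⟨d, hd, hST ▸ hpow⟩

theorem stmt18 (n m q : ℕ) (hmn : m < n) (hqpp : IsPrimePow q)
    (F : Type*) [Field F] [Fintype F] (hq : Fintype.card F = q) :
    (∀ d, d < m →
      Nat.card {p : Set (Fin n → F) × Set (Fin n → F) //
          IsFlat F m p.1 ∧ IsFlat F m p.2 ∧ (p.1 ∩ p.2).ncard = q ^ d}
        ≤ 64 * q ^ ((n - d) * (d + 1) + 2 * (n - m) * (m - d))) ∧
    (∀ k, 1 ≤ k → (¬ ∃ d ≤ m, k = q ^ d) →
      Nat.card {p : Set (Fin n → F) × Set (Fin n → F) //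
          IsFlat F m p.1 ∧ IsFlat F m p.2 ∧ (p.1 ∩ p.2).ncard = k} = 0) :=
  stmt18_general n m q F hq
end
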